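/- arXiv:2408.06630 — 2 statements merged into one kernel-verified Lean document; each statement's English description precedes it below -/
import Mathlib

section
/- Let E be a Banach lattice, let ι be an index type, and for each i ∈ ι let φᵢ : E → Eᵢ be a contractive vector lattice homomorphism into a Banach lattice Eᵢ. Suppose that ‖x‖ = ⨆_{i ∈ ι} ‖φᵢ(x)‖ for every x ∈ E. If every Eᵢ satisfies ‖|a| ⊔ |b|‖ ≤ max(‖a‖, ‖b‖) for all a, b ∈ Eᵢ (∞-convexity with constant 1), then E also satisfies ‖|a| ⊔ |b|‖ ≤ max(‖a‖, ‖b‖) for all a, b ∈ E. -/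
theorem map_abs_of_map_sup {E F G : Type*} [AddGroup E] [Lattice E] [AddGroup F] [Lattice F]
    [FunLike G E F] [AddMonoidHomClass G E F] (f : G) (hf : ∀ a b, f (a ⊔ b) = f a ⊔ f b) (x : E) :
    f |x| = |f x| := by
  rw [abs, abs, hf, map_neg]

theorem norm_map_abs_sup_abs_le {E F : Type*}
    [SeminormedAddCommGroup E] [Lattice E] [NormedSpace ℝ E]
    [SeminormedAddCommGroup F] [Lattice F] [NormedSpace ℝ F]
    (φ : E →L[ℝ] F) (hcontr : ‖φ‖ ≤ 1) (hhom : ∀ a b, φ (a ⊔ b) = φ a ⊔ φ b)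
    (hconv : ∀ a b : F, ‖|a| ⊔ |b|‖ ≤ max ‖a‖ ‖b‖) (a b : E) :
    ‖φ (|a| ⊔ |b|)‖ ≤ max ‖a‖ ‖b‖ := by
  have hle (x : E) : ‖φ x‖ ≤ ‖x‖ := by simpa using φ.le_of_opNorm_le hcontr x
  calc ‖φ (|a| ⊔ |b|)‖ = ‖|φ a| ⊔ |φ b|‖ := by
        rw [hhom, map_abs_of_map_sup φ hhom, map_abs_of_map_sup φ hhom]
    _ ≤ max ‖φ a‖ ‖φ b‖ := hconv _ _
    _ ≤ max ‖a‖ ‖b‖ := max_le_max (hle a) (hle b)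

theorem inftyConvex_of_norming_family_of_latticeHoms_general
    (E : Type) [NormedAddCommGroup E] [Lattice E] [NormedSpace ℝ E]
    (ι : Type) (F : ι → Type)
    [∀ i, NormedAddCommGroup (F i)] [∀ i, Lattice (F i)]
    [∀ i, NormedSpace ℝ (F i)]
    (φ : ∀ i, E →L[ℝ] F i)
    (hcontr : ∀ i, ‖φ i‖ ≤ 1)
    (hhom : ∀ i, ∀ a b : E, φ i (a ⊔ b) = φ i a ⊔ φ i b)
    (hnorming : ∀ x : E, ‖x‖ = ⨆ i, ‖φ i x‖)
    (hconv : ∀ i, ∀ a b : F i, ‖|a| ⊔ |b|‖ ≤ max ‖a‖ ‖b‖) :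
    ∀ a b : E, ‖|a| ⊔ |b|‖ ≤ max ‖a‖ ‖b‖ := by
  intro a b
  rw [hnorming (|a| ⊔ |b|)]
  exact Real.iSup_le (fun i ↦ norm_map_abs_sup_abs_le (φ i) (hcontr i) (hhom i) (hconv i) a b)
    (le_max_of_le_left (norm_nonneg a))

/-- If a Banach lattice `E` admits a norming family of contractive vector lattice
homomorphisms into Banach lattices that are all ∞-convex with ∞-convexity constant 1,
then `E` is ∞-convex with ∞-convexity constant 1. -/
theorem inftyConvex_of_norming_family_of_latticeHoms
    (E : Type) [NormedAddCommGroup E] [Lattice E] [HasSolidNorm E] [IsOrderedAddMonoid E] [NormedSpace ℝ E] [CompleteSpace E]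
    (ι : Type) (F : ι → Type)
    [∀ i, NormedAddCommGroup (F i)] [∀ i, Lattice (F i)]
    [∀ i, HasSolidNorm (F i)] [∀ i, IsOrderedAddMonoid (F i)] [∀ i, NormedSpace ℝ (F i)]
    [∀ i, CompleteSpace (F i)]
    (φ : ∀ i, E →L[ℝ] F i)
    (hcontr : ∀ i, ‖φ i‖ ≤ 1)
    (hhom : ∀ i, ∀ a b : E, φ i (a ⊔ b) = φ i a ⊔ φ i b)
    (hnorming : ∀ x : E, ‖x‖ = ⨆ i, ‖φ i x‖)
    (hconv : ∀ i, ∀ a b : F i, ‖|a| ⊔ |b|‖ ≤ max ‖a‖ ‖b‖) :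
    ∀ a b : E, ‖|a| ⊔ |b|‖ ≤ max ‖a‖ ‖b‖ :=
  inftyConvex_of_norming_family_of_latticeHoms_general E ι F φ hcontr hhom hnorming hconv
end

section
/- Let (X, X⁺) be a pre-ordered Banach space and let (j, F) be a free Banach lattice over (X, X⁺). Then the following are equivalent: (a) F ≠ {0}; (b) there exists a nonzero x* ∈ Bₓ*⁺; (c) the operator norm of j equals 1. If moreover X⁺ is a closed cone, these are also equivalent to X ≠ {0}. -/
/-- A wedge in a real vector space. -/
def IsWedge {V : Type} [AddCommGroup V] [Module ℝ V] (C : Set V) : Prop :=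
  0 ∈ C ∧ ∀ (a b : ℝ) (x y : V), 0 ≤ a → 0 ≤ b → x ∈ C → y ∈ C → a • x + b • y ∈ C

/-- The positive part of the dual unit ball of the pre-ordered Banach space `(X, C)`:
continuous linear functionals of norm at most 1 that are nonnegative on `C`. -/
def PosDualBall {X : Type} [NormedAddCommGroup X] [NormedSpace ℝ X] (C : Set X)
    (f : X →L[ℝ] ℝ) : Prop :=
  ‖f‖ ≤ 1 ∧ ∀ x ∈ C, 0 ≤ f x

/-- `(j, F)` is a free Banach lattice over the pre-ordered Banach space `(X, C)`:
`j` is a positive contraction, and every positive contraction from `X` into a Banach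
lattice factors uniquely through `j` via a contractive vector lattice homomorphism. -/
def IsFreeBanachLattice (X : Type) [NormedAddCommGroup X] [NormedSpace ℝ X]
    [CompleteSpace X] (C : Set X)
    (F : Type) [NormedAddCommGroup F] [Lattice F] [IsOrderedAddMonoid F] [HasSolidNorm F] [NormedSpace ℝ F] [CompleteSpace F]
    (j : X →L[ℝ] F) : Prop :=
  ‖j‖ ≤ 1 ∧ (∀ x ∈ C, 0 ≤ j x) ∧
  ∀ (G : Type) [NormedAddCommGroup G] [Lattice G] [IsOrderedAddMonoid G] [HasSolidNorm G] [NormedSpace ℝ G] [CompleteSpace G],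
    ∀ φ : X →L[ℝ] G, ‖φ‖ ≤ 1 → (∀ x ∈ C, 0 ≤ φ x) →
      ∃! ψ : F →L[ℝ] G, ‖ψ‖ ≤ 1 ∧ (∀ a b : F, ψ (a ⊔ b) = ψ a ⊔ ψ b) ∧
        ∀ x : X, ψ (j x) = φ x

/-!
A nonzero `j x` can be told apart from `0` by a positive functional on `F`, since the positive
cone of `F` is a closed cone and Hahn–Banach separates closed cones from points; composing with
`j` and normalising gives a nonzero element of `Bₓ*⁺`. Conversely every `g ∈ Bₓ*⁺` factors as
`ψ ∘ j` with `‖ψ‖ ≤ 1`, so a norm-one `g` forces `‖j‖ = 1`. If `j = 0`, both `id` and `0`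
extend `j`, so `F = 0`. For a closed cone `X⁺`, any `x ≠ 0` is separated from `X⁺` in the same
way.
-/

open Filter

/-- The ordering of a normed lattice is not assumed to be compatible with the real scalars;
compatibility follows from `0 ≤ 2 • a → 0 ≤ a`, which makes the set of `t` with `0 ≤ t • x`
contain the dyadic rationals, and from the closedness of the positive cone. -/
lemma smul_nonneg_of_hasSolidNorm {G : Type} [NormedAddCommGroup G] [Lattice G]
    [IsOrderedAddMonoid G] [HasSolidNorm G] [NormedSpace ℝ G]
    {c : ℝ} (hc : 0 ≤ c) {x : G} (hx : 0 ≤ x) : 0 ≤ c • x := by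
  have dyadic : ∀ k m : ℕ, 0 ≤ ((m : ℝ) / 2 ^ k) • x := by
    intro k
    induction k with
    | zero => intro m; simpa [Nat.cast_smul_eq_nsmul] using nsmul_nonneg hx m
    | succ k ih =>
      intro m
      refine nsmul_two_semiclosed ?_
      rw [← Nat.cast_smul_eq_nsmul ℝ, smul_smul]
      convert ih m using 2
      rw [pow_succ]
      field_simp
      ring
  have hclosed : IsClosed {t : ℝ | 0 ≤ t • x} :=
    isClosed_nonneg.preimage (continuous_id.smul continuous_const)
  exact hclosed.mem_of_tendsto
    ((tendsto_nat_floor_mul_div_atTop hc).comp (tendsto_pow_atTop_atTop_of_one_lt one_lt_two))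
    (Eventually.of_forall fun k => dyadic k _)

lemma isWedge_nonneg (G : Type) [NormedAddCommGroup G] [Lattice G] [IsOrderedAddMonoid G]
    [HasSolidNorm G] [NormedSpace ℝ G] : IsWedge {y : G | 0 ≤ y} :=
  ⟨le_rfl, fun _ _ _ _ ha hb hx hy =>
    add_nonneg (smul_nonneg_of_hasSolidNorm ha hx) (smul_nonneg_of_hasSolidNorm hb hy)⟩

namespace IsWedge

lemma smul_mem {V : Type} [AddCommGroup V] [Module ℝ V] {C : Set V} (hC : IsWedge C) {c : ℝ}
    (hc : 0 ≤ c) {x : V} (hx : x ∈ C) : c • x ∈ C := by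
  simpa using hC.2 c 0 x x hc le_rfl hx hx

lemma add_mem {V : Type} [AddCommGroup V] [Module ℝ V] {C : Set V} (hC : IsWedge C) {x y : V}
    (hx : x ∈ C) (hy : y ∈ C) : x + y ∈ C := by
  simpa using hC.2 1 1 x y zero_le_one zero_le_one hx hy

variable {E : Type} [NormedAddCommGroup E] [NormedSpace ℝ E] {C : Set E}

def toProperCone (hC : IsWedge C) (hcl : IsClosed C) : ProperCone ℝ E where
  carrier := C
  add_mem' := hC.add_mem
  zero_mem' := hC.1
  smul_mem' c _ hx := hC.smul_mem c.2 hx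
  isClosed' := hcl

lemma exists_dual_nonneg_ne_zero (hC : IsWedge C) (hcl : IsClosed C) (hcone : C ∩ -C = {0})
    {a : E} (ha : a ≠ 0) : ∃ f : StrongDual ℝ E, (∀ x ∈ C, 0 ≤ f x) ∧ f a ≠ 0 := by
  have h_or : a ∉ C ∨ -a ∉ C := by
    by_contra! h
    exact ha (by simpa using hcone.subset ⟨h.1, Set.mem_neg.mpr h.2⟩)
  rcases h_or with h | h
  · obtain ⟨f, hfC, hfa⟩ := (hC.toProperCone hcl).hyperplane_separation_point h
    exact ⟨f, hfC, hfa.ne⟩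
  · obtain ⟨f, hfC, hfa⟩ := (hC.toProperCone hcl).hyperplane_separation_point h
    exact ⟨f, hfC, by simpa using hfa.ne⟩

end IsWedge

lemma exists_dual_nonneg_ne_zero_of_hasSolidNorm {G : Type} [NormedAddCommGroup G] [Lattice G]
    [IsOrderedAddMonoid G] [HasSolidNorm G] [NormedSpace ℝ G] {a : G} (ha : a ≠ 0) :
    ∃ f : StrongDual ℝ G, (∀ y, 0 ≤ y → 0 ≤ f y) ∧ f a ≠ 0 := by
  have hcone : {y : G | 0 ≤ y} ∩ -{y : G | 0 ≤ y} = {0} := by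
    ext y
    simp only [Set.mem_inter_iff, Set.mem_ofPred_eq, Set.mem_neg, neg_nonneg,
      Set.mem_singleton_iff]
    exact ⟨fun h => le_antisymm h.2 h.1, fun h => h ▸ ⟨le_rfl, le_rfl⟩⟩
  exact (isWedge_nonneg G).exists_dual_nonneg_ne_zero isClosed_nonneg hcone ha

section PosDualBall

variable {X : Type} [NormedAddCommGroup X] [NormedSpace ℝ X] {C : Set X}

lemma exists_posDualBall_norm_eq_one {f : StrongDual ℝ X} (hf : ∀ x ∈ C, 0 ≤ f x)
    (hf0 : f ≠ 0) : ∃ g, PosDualBall C g ∧ ‖g‖ = 1 := by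
  have hnorm : ‖f‖ ≠ 0 := norm_ne_zero_iff.mpr hf0
  have hg : ‖‖f‖⁻¹ • f‖ = 1 := by rw [norm_smul, norm_inv, norm_norm, inv_mul_cancel₀ hnorm]
  refine ⟨‖f‖⁻¹ • f, ⟨hg.le, fun x hx => ?_⟩, hg⟩
  exact mul_nonneg (inv_nonneg.mpr (norm_nonneg f)) (hf x hx)

lemma exists_posDualBall_ne_zero_of_nonneg {f : StrongDual ℝ X} (hf : ∀ x ∈ C, 0 ≤ f x)
    (hf0 : f ≠ 0) : ∃ g, PosDualBall C g ∧ g ≠ 0 := by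
  obtain ⟨g, hg, hg1⟩ := exists_posDualBall_norm_eq_one hf hf0
  exact ⟨g, hg, norm_ne_zero_iff.mp (by simp [hg1])⟩

lemma exists_posDualBall_ne_zero_of_pos_ne_zero {G : Type} [NormedAddCommGroup G] [Lattice G]
    [IsOrderedAddMonoid G] [HasSolidNorm G] [NormedSpace ℝ G] {T : X →L[ℝ] G}
    (hT : ∀ x ∈ C, 0 ≤ T x) (hT0 : T ≠ 0) : ∃ g, PosDualBall C g ∧ g ≠ 0 := by
  obtain ⟨x, hx⟩ := DFunLike.ne_iff.mp hT0
  obtain ⟨f, hf, hfx⟩ := exists_dual_nonneg_ne_zero_of_hasSolidNorm hx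
  exact exists_posDualBall_ne_zero_of_nonneg (f := f.comp T) (fun y hy => hf _ (hT y hy))
    (DFunLike.ne_iff.mpr ⟨x, hfx⟩)

lemma IsWedge.exists_posDualBall_ne_zero (hC : IsWedge C) (hcl : IsClosed C)
    (hcone : C ∩ -C = {0}) {x : X} (hx : x ≠ 0) : ∃ g, PosDualBall C g ∧ g ≠ 0 := by
  obtain ⟨f, hf, hfx⟩ := hC.exists_dual_nonneg_ne_zero hcl hcone hx
  exact exists_posDualBall_ne_zero_of_nonneg hf (DFunLike.ne_iff.mpr ⟨x, hfx⟩)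

end PosDualBall

namespace IsFreeBanachLattice

variable {X : Type} [NormedAddCommGroup X] [NormedSpace ℝ X] [CompleteSpace X] {C : Set X}
  {F : Type} [NormedAddCommGroup F] [Lattice F] [IsOrderedAddMonoid F] [HasSolidNorm F]
  [NormedSpace ℝ F] [CompleteSpace F] {j : X →L[ℝ] F}

lemma exists_ne_zero_iff (hfree : IsFreeBanachLattice X C F j) :
    (∃ f : F, f ≠ 0) ↔ j ≠ 0 := by
  refine ⟨fun ⟨f, hf⟩ hj => hf ?_, fun hj => ?_⟩
  · obtain ⟨hj1, hjpos, huniv⟩ := hfree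
    obtain ⟨ψ, -, huniq⟩ := huniv F j hj1 hjpos
    have hid : ContinuousLinearMap.id ℝ F = ψ :=
      huniq _ ⟨ContinuousLinearMap.norm_id_le, fun _ _ => rfl, fun _ => rfl⟩
    have hzero : (0 : F →L[ℝ] F) = ψ :=
      huniq _ ⟨by simp, fun _ _ => by simp, fun _ => by simp [hj]⟩
    simpa using congrArg (· f) (hid.trans hzero.symm)
  · obtain ⟨x, hx⟩ := DFunLike.ne_iff.mp hj
    exact ⟨j x, hx⟩

lemma norm_le_norm_of_posDualBall (hfree : IsFreeBanachLattice X C F j) {g : StrongDual ℝ X}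
    (hg : PosDualBall C g) : ‖g‖ ≤ ‖j‖ := by
  obtain ⟨ψ, ⟨hψ, -, hψj⟩, -⟩ := hfree.2.2 ℝ g hg.1 hg.2
  have hg_eq : g = ψ.comp j := by ext x; exact (hψj x).symm
  calc ‖g‖ = ‖ψ.comp j‖ := by rw [← hg_eq]
    _ ≤ ‖ψ‖ * ‖j‖ := ψ.opNorm_comp_le j
    _ ≤ ‖j‖ := mul_le_of_le_one_left (norm_nonneg j) hψ

lemma norm_eq_one_of_posDualBall (hfree : IsFreeBanachLattice X C F j) {g : StrongDual ℝ X}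
    (hg : PosDualBall C g) (hg0 : g ≠ 0) : ‖j‖ = 1 := by
  obtain ⟨g', hg', hg'1⟩ := exists_posDualBall_norm_eq_one hg.2 hg0
  exact le_antisymm hfree.1 (hg'1 ▸ hfree.norm_le_norm_of_posDualBall hg')

end IsFreeBanachLattice

/-- For a free Banach lattice `(j, F)` over a pre-ordered Banach space `(X, X⁺)`, the
following are equivalent: `F` is nonzero; the positive part of the dual unit ball of `X`
is nontrivial; `‖j‖ = 1`. If moreover `X⁺` is a closed cone, these are equivalent to
`X` being nonzero. -/
theorem free_banach_lattice_nontrivial_tfae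
    (X : Type) [NormedAddCommGroup X] [NormedSpace ℝ X] [CompleteSpace X]
    (C : Set X) (hC : IsWedge C)
    (F : Type) [NormedAddCommGroup F] [Lattice F] [IsOrderedAddMonoid F] [HasSolidNorm F] [NormedSpace ℝ F] [CompleteSpace F]
    (j : X →L[ℝ] F) (hfree : IsFreeBanachLattice X C F j) :
    ((∃ f : F, f ≠ 0) ↔ ∃ g : X →L[ℝ] ℝ, PosDualBall C g ∧ g ≠ 0) ∧
    ((∃ f : F, f ≠ 0) ↔ ‖j‖ = 1) ∧
    (IsClosed C → C ∩ (-C) = {0} → ((∃ f : F, f ≠ 0) ↔ ∃ x : X, x ≠ 0)) := by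
  have hF := hfree.exists_ne_zero_iff
  have hab : (∃ f : F, f ≠ 0) → ∃ g : X →L[ℝ] ℝ, PosDualBall C g ∧ g ≠ 0 := fun h =>
    exists_posDualBall_ne_zero_of_pos_ne_zero hfree.2.1 (hF.1 h)
  have hbc : (∃ g : X →L[ℝ] ℝ, PosDualBall C g ∧ g ≠ 0) → ‖j‖ = 1 := fun ⟨_, hg, hg0⟩ =>
    hfree.norm_eq_one_of_posDualBall hg hg0
  have hca : ‖j‖ = 1 → ∃ f : F, f ≠ 0 := fun h => hF.2 (by rintro rfl; simp at h)
  refine ⟨⟨hab, hca ∘ hbc⟩, ⟨hbc ∘ hab, hca⟩, fun hcl hcone => ⟨fun h => ?_, fun ⟨x, hx⟩ =>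
    hca (hbc (hC.exists_posDualBall_ne_zero hcl hcone hx))⟩⟩
  obtain ⟨x, hx⟩ := DFunLike.ne_iff.mp (hF.1 h)
  exact ⟨x, by rintro rfl; simp at hx⟩
end
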